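/- arXiv:1502.03702 — 3 statements merged into one kernel-verified Lean document; each statement's English description precedes it below -/
import Mathlib

section
/- For every integer r ≥ 1 there holds Σ_{i=1}^{r} e_{2i} · g_{2i,2r} = (q^{r(2r-1)} - 1)/(q - 1) in K. -/
open Finset

/-- The indeterminate `q` in the field `K = RatFunc ℚ`. -/
noncomputable def q : RatFunc ℚ := RatFunc.X

/-- Gaussian binomial coefficient `[m, r]_x` with integer arguments:
`∏_{i=0}^{r-1} (1 - x^(m-i))/(1 - x^(i+1))` if `0 ≤ r ≤ m`, and `0` otherwise. -/
noncomputable def gauss (x : RatFunc ℚ) (m r : ℤ) : RatFunc ℚ :=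
  if 0 ≤ r ∧ r ≤ m then
    ∏ i ∈ Finset.range r.toNat, (1 - x ^ (m - (i : ℤ))) / (1 - x ^ ((i : ℤ) + 1))
  else 0

/-- `e_{2i}`: the E-polynomial of the space of nondegenerate skew forms on `ℂ^{2i}`
up to scaling: `q^{i(i-1)} (∏_{j=1}^{i} (q^{2j-1} - 1))/(q - 1)`. -/
noncomputable def e (i : ℤ) : RatFunc ℚ :=
  q ^ (i * (i - 1)) * (∏ j ∈ Finset.Icc (1 : ℤ) i, (q ^ (2 * j - 1) - 1)) / (q - 1)


/-!
When `x = q` is a prime power, `altFormCount x i` is the number of nondegenerate alternating forms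
on `𝔽_q^{2i}`, and `∑ᵢ altFormCount x i * [n, 2i]_x = x ^ (n choose 2)` counts all alternating forms
on `𝔽_q^n` according to their radical; `e i = altFormCount q i / (q - 1)`. For an arbitrary `x` that
is not a root of unity the identity goes by induction on `n`: writing `A i = altFormCount x i`, the
q-Pascal rule and `(x^n - x^k) [n, k] = x^k (x^(k+1) - 1) [n, k+1]` turn the `i`-th summand of
`∑ᵢ A i ([n+1, 2i] - x^n [n, 2i])` into `A i [n, 2i-1] - A (i+1) [n, 2i+1]`, so the sum telescopes to `0`.
-/

section QBinomial

variable {F : Type*} [Field F] (x : F)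

-- For `k > n` the factor `i = n` is `1 - x ^ 0 = 0`, so no case distinction is needed.
noncomputable def qBinom (n k : ℕ) : F := ∏ i ∈ range k, (1 - x ^ (n - i)) / (1 - x ^ (i + 1))

noncomputable def altFormCount (i : ℕ) : F := x ^ (i * (i - 1)) * ∏ j ∈ range i, (x ^ (2 * j + 1) - 1)

@[simp] lemma qBinom_zero_right (n : ℕ) : qBinom x n 0 = 1 := prod_range_zero _

lemma qBinom_succ_right (n k : ℕ) :
    qBinom x n (k + 1) = qBinom x n k * ((1 - x ^ (n - k)) / (1 - x ^ (k + 1))) :=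
  prod_range_succ _ _

lemma qBinom_eq_zero_of_lt {n k : ℕ} (h : n < k) : qBinom x n k = 0 :=
  prod_eq_zero (mem_range.2 h) (by simp)

@[simp] lemma altFormCount_zero : altFormCount x 0 = 1 := by simp [altFormCount]

lemma altFormCount_succ (i : ℕ) :
    altFormCount x (i + 1) = altFormCount x i * x ^ (2 * i) * (x ^ (2 * i + 1) - 1) := by
  have hexp : (i + 1) * (i + 1 - 1) = i * (i - 1) + 2 * i := by cases i <;> simp; ring
  simp only [altFormCount, prod_range_succ, hexp, pow_add]
  ring

variable {x}

lemma one_sub_pow_succ_ne_zero (hx : ¬IsOfFinOrder x) (k : ℕ) : 1 - x ^ (k + 1) ≠ 0 :=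
  sub_ne_zero.2 fun h ↦ hx (isOfFinOrder_iff_pow_eq_one.2 ⟨k + 1, k.succ_pos, h.symm⟩)

lemma qBinom_eq_div (n k : ℕ) :
    qBinom x n k = (∏ i ∈ range k, (1 - x ^ (n - i))) / ∏ i ∈ range k, (1 - x ^ (i + 1)) :=
  prod_div_distrib _ _

lemma one_sub_pow_mul_qBinom_succ_right (hx : ¬IsOfFinOrder x) (n k : ℕ) :
    (1 - x ^ (k + 1)) * qBinom x n (k + 1) = (1 - x ^ (n - k)) * qBinom x n k := by
  rw [qBinom_succ_right]
  field_simp [one_sub_pow_succ_ne_zero hx k]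

lemma one_sub_pow_mul_qBinom_succ_succ (hx : ¬IsOfFinOrder x) (n k : ℕ) :
    (1 - x ^ (k + 1)) * qBinom x (n + 1) (k + 1) = (1 - x ^ (n + 1)) * qBinom x n k := by
  have hden : ∏ i ∈ range k, (1 - x ^ (i + 1)) ≠ 0 :=
    prod_ne_zero_iff.2 fun i _ ↦ one_sub_pow_succ_ne_zero hx i
  rw [qBinom_eq_div, qBinom_eq_div, prod_range_succ', prod_range_succ, mul_div_assoc',
    mul_div_assoc', div_eq_div_iff (mul_ne_zero hden (one_sub_pow_succ_ne_zero hx k)) hden]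
  simp only [Nat.add_sub_add_right, Nat.sub_zero]
  ring

lemma qBinom_succ_succ (hx : ¬IsOfFinOrder x) (n k : ℕ) :
    qBinom x (n + 1) (k + 1) = x ^ (k + 1) * qBinom x n (k + 1) + qBinom x n k := by
  refine mul_left_cancel₀ (one_sub_pow_succ_ne_zero hx k) ?_
  rw [one_sub_pow_mul_qBinom_succ_succ hx, mul_add, mul_left_comm,
    one_sub_pow_mul_qBinom_succ_right hx]
  rcases le_or_gt k n with h | h
  · have hpow : x ^ (k + 1) * x ^ (n - k) = x ^ (n + 1) := by rw [← pow_add]; congr 1; omega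
    linear_combination qBinom x n k * hpow
  · simp [qBinom_eq_zero_of_lt x h]

lemma pow_sub_pow_mul_qBinom (hx : ¬IsOfFinOrder x) (n k : ℕ) :
    (x ^ n - x ^ k) * qBinom x n k = x ^ k * (x ^ (k + 1) - 1) * qBinom x n (k + 1) := by
  rcases le_or_gt k n with h | h
  · have hpow : x ^ k * x ^ (n - k) = x ^ n := by rw [← pow_add]; congr 1; omega
    linear_combination x ^ k * one_sub_pow_mul_qBinom_succ_right hx n k - qBinom x n k * hpow
  · simp [qBinom_eq_zero_of_lt x h, qBinom_eq_zero_of_lt x (h.trans k.lt_succ_self)]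

lemma sum_altFormCount_mul_qBinom_succ_sub (hx : ¬IsOfFinOrder x) (n N : ℕ) :
    ∑ i ∈ range (N + 1), altFormCount x i * (qBinom x (n + 1) (2 * i) - x ^ n * qBinom x n (2 * i))
      = -(altFormCount x (N + 1) * qBinom x n (2 * N + 1)) := by
  induction N with
  | zero =>
    have h := pow_sub_pow_mul_qBinom hx n 0
    simp only [zero_add, sum_range_one, altFormCount_succ, altFormCount_zero, mul_zero,
      qBinom_zero_right] at h ⊢
    linear_combination -h
  | succ N ih =>
    have hpascal := qBinom_succ_succ hx n (2 * N + 1)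
    have hshift := pow_sub_pow_mul_qBinom hx n (2 * N + 2)
    rw [sum_range_succ, ih, altFormCount_succ x (N + 1), show 2 * (N + 1) = 2 * N + 2 by ring]
    linear_combination altFormCount x (N + 1) * (hpascal - hshift)

theorem sum_altFormCount_mul_qBinom (hx : ¬IsOfFinOrder x) {N n : ℕ} (h : n ≤ 2 * N + 1) :
    ∑ i ∈ range (N + 1), altFormCount x i * qBinom x n (2 * i) = x ^ n.choose 2 := by
  induction n with
  | zero =>
    rw [sum_range_succ']
    simp [qBinom_eq_zero_of_lt]
  | succ n ih =>
    have htel := sum_altFormCount_mul_qBinom_succ_sub hx n N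
    rw [qBinom_eq_zero_of_lt x (by omega), mul_zero, neg_zero] at htel
    simp only [mul_sub, sum_sub_distrib, mul_left_comm _ (x ^ n), ← mul_sum, sub_eq_zero] at htel
    rw [htel, ih (by omega), Nat.choose_succ_succ', Nat.choose_one_right, pow_add]

end QBinomial

lemma Transcendental.not_isOfFinOrder {R A : Type*} [CommRing R] [Nontrivial R] [Ring A]
    [Algebra R A] {x : A} (hx : Transcendental R x) : ¬IsOfFinOrder x := by
  intro hfin
  obtain ⟨n, hn, hxn⟩ := isOfFinOrder_iff_pow_eq_one.1 hfin
  exact hx ⟨Polynomial.X ^ n - Polynomial.C 1, Polynomial.X_pow_sub_C_ne_zero hn 1, by simp [hxn]⟩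

lemma RatFunc.not_isOfFinOrder_X {K : Type*} [Field K] : ¬IsOfFinOrder (RatFunc.X : RatFunc K) :=
  RatFunc.transcendental_X.not_isOfFinOrder

lemma Icc_one_natCast_eq_map (m : ℕ) :
    Icc (1 : ℤ) m = (range m).map ⟨fun j ↦ ((j + 1 : ℕ) : ℤ), fun a b h ↦ by simpa using h⟩ := by
  ext a
  simp only [mem_Icc, mem_map, mem_range, Function.Embedding.coeFn_mk, Nat.cast_add, Nat.cast_one]
  constructor
  · intro h
    exact ⟨(a - 1).toNat, by omega, by omega⟩
  · rintro ⟨j, hj, rfl⟩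
    omega

lemma gauss_natCast (x : RatFunc ℚ) (n k : ℕ) : gauss x n k = qBinom x n k := by
  rw [gauss]
  split_ifs with h
  · rw [Int.toNat_natCast, qBinom]
    refine prod_congr rfl fun i hi ↦ ?_
    have hin : i ≤ n := by rw [mem_range] at hi; omega
    rw [← Nat.cast_sub hin, ← Nat.cast_succ, zpow_natCast, zpow_natCast]
  · exact (qBinom_eq_zero_of_lt x (by omega)).symm

lemma e_natCast (i : ℕ) : e i = altFormCount q i / (q - 1) := by
  have hexp : q ^ ((i : ℤ) * (i - 1)) = q ^ (i * (i - 1)) := by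
    rw [← zpow_natCast]
    rcases i with _ | i <;> simp
  have hodd (j : ℕ) : q ^ (2 * ((j : ℤ) + 1) - 1) = q ^ (2 * j + 1) := by
    rw [← zpow_natCast]
    push_cast
    ring_nf
  simp only [e, altFormCount, Icc_one_natCast_eq_map, prod_map, Function.Embedding.coeFn_mk,
    Nat.cast_add, Nat.cast_one, hexp, hodd]

theorem stmt1 (r : ℤ) (hr : 1 ≤ r) :
    ∑ i ∈ Finset.Icc (1 : ℤ) r, e i * gauss q (2 * r) (2 * i) =
      (q ^ (r * (2 * r - 1)) - 1) / (q - 1) := by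
  lift r to ℕ using by omega with m
  have hq : ¬IsOfFinOrder q := RatFunc.not_isOfFinOrder_X
  have hsum := sum_altFormCount_mul_qBinom hq (N := m) (n := 2 * m) (by omega)
  rw [sum_range_succ', altFormCount_zero, qBinom_zero_right, one_mul, ← eq_sub_iff_add_eq] at hsum
  have hterm (j : ℕ) : e (j + 1) * gauss q (2 * m) (2 * (j + 1)) =
      altFormCount q (j + 1) * qBinom q (2 * m) (2 * (j + 1)) / (q - 1) := by
    rw [← Nat.cast_succ, e_natCast, ← gauss_natCast]
    push_cast
    ring
  have hexp : ((2 * m).choose 2 : ℤ) = m * (2 * m - 1) := by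
    rw [Nat.choose_two_right, mul_assoc, Nat.mul_div_cancel_left _ two_pos, Nat.cast_mul,
      Nat.cast_sub (by omega)]
    push_cast
    ring
  simp only [Icc_one_natCast_eq_map, sum_map, Function.Embedding.coeFn_mk, Nat.cast_add,
    Nat.cast_one, hterm]
  rw [← sum_div, hsum, ← hexp, zpow_natCast]
end

section
/- Let F be a finite field with q elements, let n ≥ 3 be an odd integer, let V = F^n, let k be an integer with 0 ≤ k ≤ (n-1)/2, and let w be an alternating bilinear form on V whose radical has dimension 2k+1. Then the number of 2-dimensional F-subspaces T ⊆ V with w(t, t') = 0 for all t, t' ∈ T equals, as a rational number, ((q^{2k} - 1)/(q² - 1)) · q^{n-1} + (1/(q+1)) · ((q^{n-1} - 1)/(q - 1))². -/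
/-!
Count ordered pairs `(u, v)` of linearly independent vectors with `w u v = 0` in two ways.
Each such pair is an ordered basis of the isotropic plane it spans, and a plane has
`(q² - 1)(q² - q)` ordered bases. On the other hand, for fixed `u ≠ 0` the admissible `v` form
`ker (w u) \ F u`, of size `q ^ n - q` when `u` lies in the radical and `q ^ (n - 1) - q` otherwise.
-/
open Module Submodule LinearMap Set

section IsotropicPlanes

variable {F V : Type*} [Field F] [AddCommGroup V] [Module F V]

def IsIsotropic (w : V →ₗ[F] V →ₗ[F] F) (T : Submodule F V) : Prop :=
  ∀ t ∈ T, ∀ t' ∈ T, w t t' = 0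

lemma isIsotropic_span_iff (w : V →ₗ[F] V →ₗ[F] F) (S : Set V) :
    IsIsotropic w (span F S) ↔ ∀ x ∈ S, ∀ y ∈ S, w x y = 0 := by
  refine ⟨fun h x hx y hy => h x (subset_span hx) y (subset_span hy), fun h => ?_⟩
  have hS : ∀ x ∈ S, span F S ≤ ker (w x) := fun x hx =>
    span_le.2 fun y hy => mem_ker.2 (h x hx y hy)
  intro x hx y hy
  have : span F S ≤ ker (w.flip y) := span_le.2 fun x' hx' => mem_ker.2 (hS x' hx' hy)
  exact mem_ker.1 (this hx)

lemma LinearMap.IsAlt.isIsotropic_span_range_iff {w : V →ₗ[F] V →ₗ[F] F} (hw : w.IsAlt)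
    (s : Fin 2 → V) :
    IsIsotropic w (span F (Set.range s)) ↔ w (s 0) (s 1) = 0 := by
  simp only [isIsotropic_span_iff, forall_mem_range, Fin.forall_fin_two, hw.self_eq_zero,
    hw.eq_iff (x := s 1), and_self, true_and, and_true]

lemma linearIndependent_pair_iff_notMem_span {u v : V} (hu : u ≠ 0) :
    LinearIndependent F ![u, v] ↔ v ∉ span F {u} := by
  simp [LinearIndependent.pair_iff' hu, mem_span_singleton]

lemma finrank_ker_apply_add_one [FiniteDimensional F V] {w : V →ₗ[F] V →ₗ[F] F} {u : V}
    (hu : u ∉ ker w) : finrank F (ker (w u)) + 1 = finrank F V :=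
  Module.Dual.finrank_ker_add_one_of_ne_zero fun h => hu (mem_ker.2 h)

variable [Finite V]

lemma span_range_subtype_comp_eq {k : ℕ} {T : Submodule F V} (hT : finrank F T = k)
    {t : Fin k → T} (ht : LinearIndependent F t) : span F (range (T.subtype ∘ t)) = T := by
  apply eq_of_le_of_finrank_eq
  · rw [span_le, range_comp]; rintro _ ⟨x, -, rfl⟩; exact x.2
  · rw [finrank_span_eq_card (ht.map' _ T.ker_subtype), Fintype.card_fin, hT]

variable [Fintype F]

lemma ncard_submodule_sdiff {A B : Submodule F V} (h : A ≤ B) :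
    (((B : Set V) \ A).ncard : ℚ) =
      Fintype.card F ^ finrank F B - Fintype.card F ^ finrank F A := by
  have hcard (C : Submodule F V) : (C : Set V).ncard = Fintype.card F ^ finrank F C := by
    rw [← Nat.card_coe_set_eq, ← Nat.card_eq_fintype_card]
    exact natCard_eq_pow_finrank
  rw [ncard_sdiff h, Nat.cast_sub (ncard_le_ncard h), hcard, hcard, Nat.cast_pow, Nat.cast_pow]

lemma card_linearIndependent_span_eq {k : ℕ} {T : Submodule F V} (hT : finrank F T = k) :
    Nat.card {s : Fin k → V // LinearIndependent F s ∧ span F (range s) = T} =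
      ∏ i : Fin k, (Fintype.card F ^ k - Fintype.card F ^ i.val) := by
  rw [← hT, ← card_linearIndependent le_rfl, hT]
  refine Nat.card_congr
    { toFun s := ⟨fun i => ⟨s.1 i, s.2.2.le (subset_span (mem_range_self i))⟩,
        LinearIndependent.of_comp T.subtype s.2.1⟩
      invFun t := ⟨T.subtype ∘ t, t.2.map' _ T.ker_subtype, span_range_subtype_comp_eq hT t.2⟩
      left_inv _ := rfl
      right_inv _ := rfl }

lemma card_linearIndependent_and_span (P : Submodule F V → Prop) (k : ℕ) :
    Nat.card {s : Fin k → V // LinearIndependent F s ∧ P (span F (range s))} =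
      Nat.card {T : Submodule F V // finrank F T = k ∧ P T} *
        ∏ i : Fin k, (Fintype.card F ^ k - Fintype.card F ^ i.val) := by
  classical
  have := Fintype.ofFinite (Submodule F V)
  let f : {s : Fin k → V // LinearIndependent F s ∧ P (span F (range s))} →
      {T : Submodule F V // finrank F T = k ∧ P T} :=
    fun s => ⟨span F (range s.1), by rw [finrank_span_eq_card s.2.1, Fintype.card_fin], s.2.2⟩
  have hfiber (T : {T : Submodule F V // finrank F T = k ∧ P T}) :
      {s // f s = T} ≃ {s : Fin k → V // LinearIndependent F s ∧ span F (range s) = T} :=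
    { toFun s := ⟨s.1.1, s.1.2.1, congrArg Subtype.val s.2⟩
      invFun s := ⟨⟨s.1, s.2.1, by rw [s.2.2]; exact T.2.2⟩, Subtype.ext s.2.2⟩
      left_inv _ := rfl
      right_inv _ := rfl }
  rw [← Nat.card_congr (Equiv.sigmaFiberEquiv f), Nat.card_sigma]
  simp_rw [Nat.card_congr (hfiber _)]
  rw [Finset.sum_congr rfl fun T _ => card_linearIndependent_span_eq T.2.1, Finset.sum_const,
    Finset.card_univ, smul_eq_mul, Nat.card_eq_fintype_card]

def orthogonalPairsEquiv (w : V →ₗ[F] V →ₗ[F] F) :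
    {s : Fin 2 → V // LinearIndependent F s ∧ w (s 0) (s 1) = 0} ≃
      Σ u : {u : V // u ≠ 0}, ↥((ker (w u) : Set V) \ span F {u.1}) where
  toFun s := ⟨⟨s.1 0, s.2.1.ne_zero 0⟩, ⟨s.1 1, mem_ker.2 s.2.2,
    (linearIndependent_pair_iff_notMem_span (s.2.1.ne_zero 0)).1
      (FinVec.etaExpand_eq s.1 ▸ s.2.1)⟩⟩
  invFun p :=
    ⟨![p.1.1, p.2.1], (linearIndependent_pair_iff_notMem_span p.1.2).2 p.2.2.2, p.2.2.1⟩
  left_inv s := Subtype.ext (FinVec.etaExpand_eq s.1)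
  right_inv _ := rfl

lemma LinearMap.IsAlt.card_independent_orthogonal_pairs {w : V →ₗ[F] V →ₗ[F] F}
    (hw : w.IsAlt) :
    (Nat.card {s : Fin 2 → V // LinearIndependent F s ∧ w (s 0) (s 1) = 0} : ℚ) =
      (Fintype.card F ^ finrank F (ker w) - 1) * (Fintype.card F ^ finrank F V - Fintype.card F) +
        (Fintype.card F ^ finrank F V - Fintype.card F ^ finrank F (ker w)) *
          (Fintype.card F ^ (finrank F V - 1) - Fintype.card F) := by
  classical
  have := Fintype.ofFinite V
  set q : ℚ := (Fintype.card F : ℚ)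
  have hfiber (u : {u : V // u ≠ 0}) : (((ker (w u) : Set V) \ span F {u.1}).ncard : ℚ) =
      if u.1 ∈ ker w then q ^ finrank F V - q else q ^ (finrank F V - 1) - q := by
    have hle : span F {u.1} ≤ ker (w u) := (span_singleton_le_iff_mem _ _).2 (hw u)
    rw [ncard_submodule_sdiff hle, finrank_span_singleton u.2, pow_one]
    split_ifs with hu
    · rw [mem_ker.1 hu, ker_zero, finrank_top]
    · rw [← finrank_ker_apply_add_one hu, Nat.add_sub_cancel]
  have hcount (p : V → Prop) [DecidablePred p] :
      (Finset.univ.filter fun u : {u : V // u ≠ 0} => p u.1).card =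
        {u | u ≠ 0 ∧ p u}.ncard := by
    rw [← Fintype.card_subtype, ← Nat.card_eq_fintype_card, ← Nat.card_coe_set_eq]
    exact Nat.card_congr (Equiv.subtypeSubtypeEquivSubtypeInter _ _)
  rw [Nat.card_congr (orthogonalPairsEquiv w), Nat.card_sigma, Nat.cast_sum]
  simp only [Nat.card_coe_set_eq]
  rw [Finset.sum_congr rfl fun u _ => hfiber u, Finset.sum_ite, Finset.sum_const,
    Finset.sum_const, nsmul_eq_mul, nsmul_eq_mul]
  have hrad : {u | u ≠ 0 ∧ u ∈ ker w} = (ker w : Set V) \ (⊥ : Submodule F V) := by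
    ext u; simp [and_comm]
  have hnonrad : {u | u ≠ 0 ∧ u ∉ ker w} = ((⊤ : Submodule F V) : Set V) \ ker w := by
    ext u
    simpa using fun hu h => hu (h ▸ map_zero w)
  rw [hcount (· ∈ ker w), hcount (· ∉ ker w), hrad, hnonrad, ncard_submodule_sdiff bot_le,
    ncard_submodule_sdiff le_top, finrank_bot, finrank_top, pow_zero]

lemma LinearMap.IsAlt.card_isotropic_planes_mul {w : V →ₗ[F] V →ₗ[F] F} (hw : w.IsAlt) :
    (Nat.card {T : Submodule F V // finrank F T = 2 ∧ IsIsotropic w T} : ℚ) *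
        ((Fintype.card F ^ 2 - 1) * (Fintype.card F ^ 2 - Fintype.card F)) =
      (Fintype.card F ^ finrank F (ker w) - 1) * (Fintype.card F ^ finrank F V - Fintype.card F) +
        (Fintype.card F ^ finrank F V - Fintype.card F ^ finrank F (ker w)) *
          (Fintype.card F ^ (finrank F V - 1) - Fintype.card F) := by
  have h := card_linearIndependent_and_span (IsIsotropic w) 2
  simp only [hw.isIsotropic_span_range_iff] at h
  have hpow (i : Fin 2) : Fintype.card F ^ i.val ≤ Fintype.card F ^ 2 :=
    Nat.pow_le_pow_right Fintype.card_pos (by omega)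
  rw [← hw.card_independent_orthogonal_pairs, h, Nat.cast_mul, Fin.prod_univ_two, Nat.cast_mul,
    Nat.cast_sub (hpow 0), Nat.cast_sub (hpow 1)]
  simp

lemma eq_of_mul_eq_isotropic_plane_count {q N : ℚ} (hq : 1 < q) (k m : ℕ)
    (h : N * ((q ^ 2 - 1) * (q ^ 2 - q)) =
      (q ^ (2 * k + 1) - 1) * (q ^ (m + 1) - q) + (q ^ (m + 1) - q ^ (2 * k + 1)) * (q ^ m - q)) :
    N = (q ^ (2 * k) - 1) / (q ^ 2 - 1) * q ^ m + 1 / (q + 1) * ((q ^ m - 1) / (q - 1)) ^ 2 := by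
  have h1 : q - 1 ≠ 0 := by linarith
  have h2 : q + 1 ≠ 0 := by linarith
  have h3 : q ^ 2 - 1 ≠ 0 := by nlinarith
  have h4 : q ^ 2 - q ≠ 0 := by nlinarith
  apply mul_right_cancel₀ (mul_ne_zero h3 h4)
  rw [h]
  field_simp
  ring

end IsotropicPlanes

theorem stmt5_general (F : Type*) [Field F] [Fintype F] (n k : ℕ)
    (w : (Fin n → F) →ₗ[F] (Fin n → F) →ₗ[F] F)
    (halt : ∀ v, w v v = 0)
    (hrad : Module.finrank F (LinearMap.ker w) = 2 * k + 1) :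
    (Nat.card {T : Submodule F (Fin n → F) //
        Module.finrank F T = 2 ∧ ∀ t ∈ T, ∀ t' ∈ T, w t t' = 0} : ℚ) =
      (((Fintype.card F : ℚ) ^ (2 * k) - 1) / ((Fintype.card F : ℚ) ^ 2 - 1)) *
          (Fintype.card F : ℚ) ^ (n - 1) +
        (1 / ((Fintype.card F : ℚ) + 1)) *
          (((Fintype.card F : ℚ) ^ (n - 1) - 1) / ((Fintype.card F : ℚ) - 1)) ^ 2 := by
  have hdim : finrank F (Fin n → F) = n := finrank_fin_fun F
  obtain ⟨m, rfl⟩ : ∃ m, n = m + 1 :=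
    ⟨n - 1, by have := (ker w).finrank_le; omega⟩
  have hcount := LinearMap.IsAlt.card_isotropic_planes_mul (w := w) halt
  rw [hrad, hdim, Nat.add_sub_cancel] at hcount
  rw [Nat.add_sub_cancel]
  exact eq_of_mul_eq_isotropic_plane_count (by exact_mod_cast Fintype.one_lt_card) k m hcount

theorem stmt5 (F : Type*) [Field F] [Fintype F] (n k : ℕ) (hn : 3 ≤ n) (hodd : Odd n)
    (hk : k ≤ (n - 1) / 2)
    (w : (Fin n → F) →ₗ[F] (Fin n → F) →ₗ[F] F)
    (halt : ∀ v, w v v = 0)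
    (hrad : Module.finrank F (LinearMap.ker w) = 2 * k + 1) :
    (Nat.card {T : Submodule F (Fin n → F) //
        Module.finrank F T = 2 ∧ ∀ t ∈ T, ∀ t' ∈ T, w t t' = 0} : ℚ) =
      (((Fintype.card F : ℚ) ^ (2 * k) - 1) / ((Fintype.card F : ℚ) ^ 2 - 1)) *
          (Fintype.card F : ℚ) ^ (n - 1) +
        (1 / ((Fintype.card F : ℚ) + 1)) *
          (((Fintype.card F : ℚ) ^ (n - 1) - 1) / ((Fintype.card F : ℚ) - 1)) ^ 2 :=
  stmt5_general F n k w halt hrad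
end

section
/- Let F be a finite field with q elements, let n ≥ 4 be an even integer, let V = F^n, let k be an integer with 0 ≤ k < n/2, and let w be an alternating bilinear form on V whose radical has dimension 2k. Then the number of 2-dimensional F-subspaces T ⊆ V with w(t, t') = 0 for all t, t' ∈ T equals, as a rational number, ((q^{2k} - 1)/(q² - 1)) · q^{n-2} + ((q^{n-2} - 1)(q^n - 1))/((q - 1)²(q + 1)). -/
/-!
Double count the pairs `(u, v)` of linearly independent vectors with `w u v = 0`, i.e. the
ordered bases of isotropic planes (for alternating `w`, `w u v = 0` makes `span {u, v}`
isotropic). Each plane has `(q² - 1)(q² - q)` ordered bases. Counted by the first vector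
instead: for `u` in the radical, `v` is any vector outside `F ∙ u`, so there are `q ^ n - q`
choices; otherwise `v` ranges over the hyperplane `ker (w u)` minus `F ∙ u`, giving
`q ^ (n - 1) - q` choices.
-/

open Finset Module Submodule

theorem Finset.card_filter_prod_eq_mul {α β : Type*} [Fintype α] [Fintype β]
    (pa : α → Prop) (pb : α → β → Prop) [DecidablePred pa] [∀ a, DecidablePred (pb a)]
    {c : ℕ} (h : ∀ a, pa a → #{b | pb a b} = c) :
    #{p : α × β | pa p.1 ∧ pb p.1 p.2} = #{a | pa a} * c := by
  rw [card_filter, Fintype.sum_prod_type, card_eq_sum_ones, sum_filter, sum_mul]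
  refine sum_congr rfl fun a _ => ?_
  split_ifs with ha
  · rw [← h a ha, card_filter, one_mul]
    simp only [ha, true_and]
  · simp only [ha, false_and, if_false, sum_const_zero, zero_mul]

section
variable {F V : Type*} [Field F] [AddCommGroup V] [Module F V]

theorem finrank_span_pair {u v : V} (hu : u ≠ 0) (hv : v ∉ span F {u}) :
    finrank F (span F {u, v}) = 2 := by
  classical
  have hvu : v ∉ ({u} : Set V) := fun h => hv (subset_span h)
  have hli : LinearIndepOn F id ({v, u} : Set V) :=
    (linearIndepOn_id_insert hvu).2 ⟨(linearIndepOn_singleton_iff F).2 hu, hv⟩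
  rw [Set.pair_comm, finrank_span_set_eq_card hli, Set.toFinset_insert, Set.toFinset_singleton,
    card_pair (by simpa using hvu)]

theorem span_pair_eq_iff_of_finrank_eq_two [FiniteDimensional F V] {T : Submodule F V}
    (hT : finrank F T = 2) {u v : V} (hu : u ≠ 0) (hv : v ∉ span F {u}) :
    span F {u, v} = T ↔ u ∈ T ∧ v ∈ T := by
  constructor
  · rintro rfl
    exact ⟨subset_span (by simp), subset_span (by simp)⟩
  · rintro ⟨huT, hvT⟩
    refine eq_of_le_of_finrank_eq ?_ (by rw [finrank_span_pair hu hv, hT])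
    rw [span_le, Set.insert_subset_iff, Set.singleton_subset_iff]
    exact ⟨huT, hvT⟩

open scoped Classical
variable [Fintype F] [Fintype V]

theorem card_filter_mem_submodule (S : Submodule F V) :
    #{v | v ∈ S} = Fintype.card F ^ finrank F S := by
  rw [← Fintype.card_subtype, card_eq_pow_finrank (K := F) (V := S)]

theorem card_filter_ne_zero_mem (S : Submodule F V) :
    #{v | v ≠ 0 ∧ v ∈ S} = Fintype.card F ^ finrank F S - 1 := by
  rw [← card_filter_mem_submodule, ← card_erase_of_mem (s := {v | v ∈ S}) (a := 0) (by simp)]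
  congr 1
  ext v
  simp

theorem card_filter_notMem_mem_of_le {A B : Submodule F V} (hAB : A ≤ B) :
    #{v | v ∉ A ∧ v ∈ B} = Fintype.card F ^ finrank F B - Fintype.card F ^ finrank F A := by
  rw [← card_filter_mem_submodule, ← card_filter_mem_submodule,
    ← card_sdiff_of_subset (fun v => by simpa using @hAB v)]
  congr 1
  ext v
  simp [and_comm]

theorem card_filter_span_pair_eq {T : Submodule F V} (hT : finrank F T = 2) :
    #{p : V × V | (p.1 ≠ 0 ∧ p.1 ∈ T) ∧ (p.2 ∉ span F {p.1} ∧ p.2 ∈ T)} =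
      (Fintype.card F ^ 2 - 1) * (Fintype.card F ^ 2 - Fintype.card F) := by
  rw [card_filter_prod_eq_mul (fun u => u ≠ 0 ∧ u ∈ T) (fun u v => v ∉ span F {u} ∧ v ∈ T),
    card_filter_ne_zero_mem, hT]
  rintro u ⟨hu, huT⟩
  rw [card_filter_notMem_mem_of_le (span_le.2 (Set.singleton_subset_iff.2 huT)), hT,
    finrank_span_singleton hu, pow_one]

end

theorem LinearMap.apply_eq_zero_of_mem_span {R M N P : Type*} [CommSemiring R]
    [AddCommMonoid M] [AddCommMonoid N] [AddCommMonoid P] [Module R M] [Module R N] [Module R P]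
    (B : M →ₗ[R] N →ₗ[R] P) {s : Set M} {t : Set N} (h : ∀ x ∈ s, ∀ y ∈ t, B x y = 0)
    {x : M} {y : N} (hx : x ∈ span R s) (hy : y ∈ span R t) : B x y = 0 := by
  have hs : span R s ≤ LinearMap.ker (B.flip y) :=
    span_le.2 fun x' hx' => (span_le.2 fun y' hy' => h x' hx' y' hy' :
      span R t ≤ LinearMap.ker (B x')) hy
  exact hs hx

namespace LinearMap.BilinForm

variable {F V : Type*} [Field F] [AddCommGroup V] [Module F V] {w : LinearMap.BilinForm F V}

theorem IsAlt.apply_eq_zero_of_mem_span_pair (hw : w.IsAlt) {u v : V} (huv : w u v = 0)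
    {x y : V} (hx : x ∈ span F {u, v}) (hy : y ∈ span F {u, v}) : w x y = 0 :=
  LinearMap.apply_eq_zero_of_mem_span w (by
    rintro _ (rfl | rfl) _ (rfl | rfl)
    exacts [hw.self_eq_zero _, huv, hw.isRefl _ _ huv, hw.self_eq_zero _]) hx hy

open scoped Classical
variable [Fintype F] [Fintype V]

variable (w) in
noncomputable def isotropicPairs : Finset (V × V) :=
  {p | p.1 ≠ 0 ∧ p.2 ∉ span F {p.1} ∧ w p.1 p.2 = 0}

variable (w) in
noncomputable def isotropicPlanes : Finset (Submodule F V) :=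
  {T | finrank F T = 2 ∧ ∀ t ∈ T, ∀ t' ∈ T, w t t' = 0}

theorem card_isotropicPairs_eq_card_isotropicPlanes_mul (hw : w.IsAlt) :
    #(isotropicPairs w) =
      #(isotropicPlanes w) *
        ((Fintype.card F ^ 2 - 1) * (Fintype.card F ^ 2 - Fintype.card F)) := by
  refine card_eq_sum_card_fiberwise (f := fun p => span F {p.1, p.2}) (fun p hp => ?_) |>.trans
    (sum_const_nat fun T hT => ?_)
  · simp only [isotropicPairs, isotropicPlanes, coe_filter, mem_univ, true_and,
      Set.mem_ofPred_eq] at hp ⊢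
    exact ⟨finrank_span_pair hp.1 hp.2.1, fun t ht t' ht' =>
      hw.apply_eq_zero_of_mem_span_pair hp.2.2 ht ht'⟩
  · simp only [isotropicPlanes, mem_filter, mem_univ, true_and] at hT
    obtain ⟨hT, hTiso⟩ := hT
    rw [← card_filter_span_pair_eq hT]
    congr 1
    ext ⟨u, v⟩
    simp only [isotropicPairs, mem_filter, mem_univ, true_and]
    constructor
    · rintro ⟨⟨hu, hv, -⟩, huvT⟩
      exact ⟨⟨hu, ((span_pair_eq_iff_of_finrank_eq_two hT hu hv).1 huvT).1⟩, hv,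
        ((span_pair_eq_iff_of_finrank_eq_two hT hu hv).1 huvT).2⟩
    · rintro ⟨⟨hu, huT⟩, hv, hvT⟩
      exact ⟨⟨hu, hv, hTiso u huT v hvT⟩,
        (span_pair_eq_iff_of_finrank_eq_two hT hu hv).2 ⟨huT, hvT⟩⟩

theorem card_filter_notMem_span_apply_eq_zero (hw : w.IsAlt) {u : V} (hu : u ≠ 0) :
    #{v | v ∉ span F {u} ∧ w u v = 0} =
      Fintype.card F ^ finrank F (LinearMap.ker (w u)) - Fintype.card F := by
  have hle : span F {u} ≤ LinearMap.ker (w u) :=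
    span_le.2 (Set.singleton_subset_iff.2 (hw.self_eq_zero u))
  have hker : #{v | v ∉ span F {u} ∧ w u v = 0} =
      #{v | v ∉ span F {u} ∧ v ∈ LinearMap.ker (w u)} := by
    simp only [LinearMap.mem_ker]
  rw [hker, card_filter_notMem_mem_of_le hle, finrank_span_singleton hu, pow_one]

theorem card_filter_isotropicPairs_mem_ker (hw : w.IsAlt) :
    #{p ∈ isotropicPairs w | p.1 ∈ LinearMap.ker w} =
      (Fintype.card F ^ finrank F (LinearMap.ker w) - 1) *
        (Fintype.card F ^ finrank F V - Fintype.card F) := by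
  have hpairs : {p ∈ isotropicPairs w | p.1 ∈ LinearMap.ker w} =
      ({p : V × V | (p.1 ≠ 0 ∧ p.1 ∈ LinearMap.ker w) ∧ (p.2 ∉ span F {p.1} ∧ w p.1 p.2 = 0)} :
        Finset (V × V)) := by
    ext
    simp only [isotropicPairs, mem_filter, mem_univ, true_and]
    tauto
  rw [hpairs, card_filter_prod_eq_mul (fun u => u ≠ 0 ∧ u ∈ LinearMap.ker w)
    (fun u v => v ∉ span F {u} ∧ w u v = 0), card_filter_ne_zero_mem]
  rintro u ⟨hu, huw⟩
  rw [card_filter_notMem_span_apply_eq_zero hw hu, LinearMap.mem_ker.1 huw, LinearMap.ker_zero,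
    finrank_top]

theorem card_filter_isotropicPairs_notMem_ker (hw : w.IsAlt) :
    #{p ∈ isotropicPairs w | p.1 ∉ LinearMap.ker w} =
      (Fintype.card F ^ finrank F V - Fintype.card F ^ finrank F (LinearMap.ker w)) *
        (Fintype.card F ^ (finrank F V - 1) - Fintype.card F) := by
  have hpairs : {p ∈ isotropicPairs w | p.1 ∉ LinearMap.ker w} =
      ({p : V × V | (p.1 ∉ LinearMap.ker w ∧ p.1 ∈ (⊤ : Submodule F V)) ∧
        (p.2 ∉ span F {p.1} ∧ w p.1 p.2 = 0)} : Finset (V × V)) := by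
    ext ⟨u, v⟩
    simp only [isotropicPairs, mem_filter, mem_univ, mem_top, true_and, and_true]
    exact ⟨fun h => ⟨h.2, h.1.2⟩, fun h => ⟨⟨fun hu => h.1 (hu ▸ zero_mem _), h.2⟩, h.1⟩⟩
  rw [hpairs, card_filter_prod_eq_mul (fun u => u ∉ LinearMap.ker w ∧ u ∈ (⊤ : Submodule F V))
    (fun u v => v ∉ span F {u} ∧ w u v = 0), card_filter_notMem_mem_of_le le_top, finrank_top]
  rintro u ⟨hu, -⟩
  have hwu : w u ≠ 0 := hu
  rw [card_filter_notMem_span_apply_eq_zero hw fun h : u = 0 => hu (h ▸ zero_mem _),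
    ← Module.Dual.finrank_ker_add_one_of_ne_zero hwu, Nat.add_sub_cancel]

theorem card_isotropicPairs (hw : w.IsAlt) :
    #(isotropicPairs w) =
      (Fintype.card F ^ finrank F (LinearMap.ker w) - 1) *
          (Fintype.card F ^ finrank F V - Fintype.card F) +
        (Fintype.card F ^ finrank F V - Fintype.card F ^ finrank F (LinearMap.ker w)) *
          (Fintype.card F ^ (finrank F V - 1) - Fintype.card F) := by
  rw [← card_filter_add_card_filter_not (fun p => p.1 ∈ LinearMap.ker w),
    card_filter_isotropicPairs_mem_ker hw, card_filter_isotropicPairs_notMem_ker hw]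

end LinearMap.BilinForm

theorem cast_eq_of_double_count {q r n N : ℕ} (hq : 2 ≤ q) (hr : r ≤ n) (hn : 2 ≤ n)
    (h : N * ((q ^ 2 - 1) * (q ^ 2 - q)) =
      (q ^ r - 1) * (q ^ n - q) + (q ^ n - q ^ r) * (q ^ (n - 1) - q)) :
    (N : ℚ) = ((q : ℚ) ^ r - 1) / ((q : ℚ) ^ 2 - 1) * (q : ℚ) ^ (n - 2) +
      ((q : ℚ) ^ (n - 2) - 1) * ((q : ℚ) ^ n - 1) / (((q : ℚ) - 1) ^ 2 * ((q : ℚ) + 1)) := by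
  obtain ⟨m, rfl⟩ : ∃ m, n = m + 2 := ⟨n - 2, by omega⟩
  rw [show m + 2 - 1 = m + 1 by omega, Nat.add_sub_cancel] at *
  have hcast := congrArg (Nat.cast : ℕ → ℚ) h
  push_cast [Nat.one_le_pow _ _ (by omega : 0 < q), Nat.pow_le_pow_right (by omega : 0 < q) hr,
    Nat.le_self_pow (by omega : m + 2 ≠ 0), Nat.le_self_pow (by omega : m + 1 ≠ 0),
    Nat.le_self_pow (by omega : 2 ≠ 0)] at hcast
  have hq' : (2 : ℚ) ≤ q := by exact_mod_cast hq
  have hD : ((q : ℚ) ^ 2 - 1) * ((q : ℚ) ^ 2 - q) ≠ 0 :=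
    (mul_pos (by nlinarith) (by nlinarith)).ne'
  have h1 : (q : ℚ) - 1 ≠ 0 := by linarith
  have h2 : (q : ℚ) + 1 ≠ 0 := by linarith
  have h3 : (q : ℚ) ^ 2 - 1 ≠ 0 := by nlinarith
  apply mul_right_cancel₀ hD
  rw [hcast]
  field_simp
  ring

theorem stmt7_general (F : Type*) [Field F] [Fintype F] (n k : ℕ)
    (hk : k < n / 2)
    (w : (Fin n → F) →ₗ[F] (Fin n → F) →ₗ[F] F)
    (halt : ∀ v, w v v = 0)
    (hrad : Module.finrank F (LinearMap.ker w) = 2 * k) :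
    (Nat.card {T : Submodule F (Fin n → F) //
        Module.finrank F T = 2 ∧ ∀ t ∈ T, ∀ t' ∈ T, w t t' = 0} : ℚ) =
      (((Fintype.card F : ℚ) ^ (2 * k) - 1) / ((Fintype.card F : ℚ) ^ 2 - 1)) *
          (Fintype.card F : ℚ) ^ (n - 2) +
        (((Fintype.card F : ℚ) ^ (n - 2) - 1) * ((Fintype.card F : ℚ) ^ n - 1)) /
          (((Fintype.card F : ℚ) - 1) ^ 2 * ((Fintype.card F : ℚ) + 1)) := by
  classical
  have hcount :=
    (LinearMap.BilinForm.card_isotropicPairs_eq_card_isotropicPlanes_mul halt).symm.trans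
      (LinearMap.BilinForm.card_isotropicPairs halt)
  rw [finrank_fin_fun, hrad] at hcount
  have hplanes : Nat.card {T : Submodule F (Fin n → F) //
      finrank F T = 2 ∧ ∀ t ∈ T, ∀ t' ∈ T, w t t' = 0} =
        #(LinearMap.BilinForm.isotropicPlanes w) := by
    rw [Nat.card_eq_fintype_card, Fintype.card_subtype]
    rfl
  rw [hplanes]
  exact cast_eq_of_double_count Fintype.one_lt_card (by omega) (by omega) hcount

theorem stmt7 (F : Type*) [Field F] [Fintype F] (n k : ℕ) (hn : 4 ≤ n) (heven : Even n)
    (hk : k < n / 2)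
    (w : (Fin n → F) →ₗ[F] (Fin n → F) →ₗ[F] F)
    (halt : ∀ v, w v v = 0)
    (hrad : Module.finrank F (LinearMap.ker w) = 2 * k) :
    (Nat.card {T : Submodule F (Fin n → F) //
        Module.finrank F T = 2 ∧ ∀ t ∈ T, ∀ t' ∈ T, w t t' = 0} : ℚ) =
      (((Fintype.card F : ℚ) ^ (2 * k) - 1) / ((Fintype.card F : ℚ) ^ 2 - 1)) *
          (Fintype.card F : ℚ) ^ (n - 2) +
        (((Fintype.card F : ℚ) ^ (n - 2) - 1) * ((Fintype.card F : ℚ) ^ n - 1)) /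
          (((Fintype.card F : ℚ) - 1) ^ 2 * ((Fintype.card F : ℚ) + 1)) :=
  stmt7_general F n k hk w halt hrad
end
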